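/- Let A be an m×n matrix and suppose its columns can be partitioned (up to a permutation of columns) into blocks A = [A_near, A_far], where A_far = A_proxy T for some m×q matrix A_proxy and q×n_far matrix T. If [A_near, A_proxy] = P · [A_near, A_proxy](J,:) is an interpolatory decomposition with P(J,:) = I, then A = P · A(J,:). -/

import Mathlib

/-- Proxy-surface compression: if the far-field columns of `A` factor through
`A_proxy`, then a row interpolatory decomposition of `[A_near, A_proxy]`
yields one of the full matrix `A` with the same `P` and `J`. -/
theorem proxy_compression {m n_near n_far q l : ℕ}
    (A : Matrix (Fin m) (Fin n_near ⊕ Fin n_far) ℝ)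
    (A_near : Matrix (Fin m) (Fin n_near) ℝ)
    (A_proxy : Matrix (Fin m) (Fin q) ℝ)
    (T : Matrix (Fin q) (Fin n_far) ℝ)
    (hnear : A.submatrix id Sum.inl = A_near)
    (hfar : A.submatrix id Sum.inr = A_proxy * T)
    (J : Fin l → Fin m) (P : Matrix (Fin m) (Fin l) ℝ)
    (hP : P.submatrix J id = (1 : Matrix (Fin l) (Fin l) ℝ))
    (hID : Matrix.fromCols A_near A_proxy =
        P * (Matrix.fromCols A_near A_proxy).submatrix J id) :
    A = P * A.submatrix J id := by
  have hsub : (Matrix.fromCols A_near A_proxy).submatrix J id =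
      Matrix.fromCols (A_near.submatrix J id) (A_proxy.submatrix J id) := by
    ext i j
    cases j <;> rfl
  rw [hsub, Matrix.mul_fromCols, Matrix.fromCols_ext_iff] at hID
  obtain ⟨hn, hp⟩ := hID
  ext i j
  cases j with
  | inl j =>
    have h1 : A i (Sum.inl j) = A_near i j := congrFun (congrFun hnear i) j
    have h2 : ∀ k, A (J k) (Sum.inl j) = A_near (J k) j := fun k =>
      congrFun (congrFun hnear (J k)) j
    simp only [Matrix.mul_apply, Matrix.submatrix_apply, id_eq, h1, h2]
    have := congrFun (congrFun hn i) j
    simpa [Matrix.mul_apply] using this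
  | inr j =>
    have h1 : A i (Sum.inr j) = (A_proxy * T) i j := congrFun (congrFun hfar i) j
    have h2 : ∀ k, A (J k) (Sum.inr j) = (A_proxy.submatrix J id * T) k j := fun k =>
      congrFun (congrFun hfar (J k)) j
    have key : (A_proxy * T) i j = (P * (A_proxy.submatrix J id * T)) i j := by
      rw [← Matrix.mul_assoc, ← hp]
    rw [h1, key, Matrix.mul_apply, Matrix.mul_apply]
    exact Finset.sum_congr rfl fun k _ => by rw [Matrix.submatrix_apply, id_eq, h2 k]
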